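/- Let V be a finite-dimensional real vector space and equip V ⊕ V* with the natural pairing ⟨(X,ξ),(Y,η)⟩ = ½(η(X) + ξ(Y)). Let J₁, J₂ : V ⊕ V* → V ⊕ V* be ℝ-linear maps with J₁² = J₂² = −id, both preserving the natural pairing, commuting (J₁J₂ = J₂J₁), and satisfying ⟨J₁J₂v, v⟩ > 0 for every nonzero v ∈ V ⊕ V*. Let L₁ and L₂ be the i-eigenspaces of the ℂ-linear extensions of J₁ and J₂ in (V ⊕ V*) ⊗ ℂ. Then dim_ℂ L₁ = 2 dim_ℂ (L₁ ∩ L₂). -/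

import Mathlib

open scoped TensorProduct

noncomputable section

namespace GKTest

/-- The natural pairing `⟨(X,ξ),(Y,η)⟩ = ½(η(X) + ξ(Y))` on `V ⊕ V*`. -/
def npair {V : Type} [AddCommGroup V] [Module ℝ V]
    (a b : V × (V →ₗ[ℝ] ℝ)) : ℝ :=
  (b.2 a.1 + a.2 b.1) / 2

/-- The `i`-eigenspace of the `ℂ`-linear extension of `J` in the complexification
(realized as `ℂ ⊗[ℝ] M`). -/
def eigI {M : Type} [AddCommGroup M] [Module ℝ M] (J : M →ₗ[ℝ] M) :
    Submodule ℂ (ℂ ⊗[ℝ] M) :=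
  Module.End.eigenspace (J.baseChange ℂ) Complex.I

/-! ### Auxiliary machinery -/

section Aux

variable {M : Type} [AddCommGroup M] [Module ℝ M]

/-- "Real part" of an element of the complexification. -/
def fre (M : Type) [AddCommGroup M] [Module ℝ M] : ℂ ⊗[ℝ] M →ₗ[ℝ] M :=
  TensorProduct.lift ((LinearMap.lsmul ℝ M).comp Complex.reLm)

/-- "Imaginary part" of an element of the complexification. -/
def fim (M : Type) [AddCommGroup M] [Module ℝ M] : ℂ ⊗[ℝ] M →ₗ[ℝ] M :=
  TensorProduct.lift ((LinearMap.lsmul ℝ M).comp Complex.imLm)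

@[simp] lemma fre_tmul (c : ℂ) (m : M) : fre M (c ⊗ₜ[ℝ] m) = c.re • m := rfl
@[simp] lemma fim_tmul (c : ℂ) (m : M) : fim M (c ⊗ₜ[ℝ] m) = c.im • m := rfl

lemma fre_baseChange (J : M →ₗ[ℝ] M) (x : ℂ ⊗[ℝ] M) :
    fre M (J.baseChange ℂ x) = J (fre M x) := by
  induction x using TensorProduct.induction_on with
  | zero => simp
  | tmul c m => simp [LinearMap.baseChange_tmul]
  | add a b ha hb => simp [map_add, ha, hb]

lemma fre_I_smul (x : ℂ ⊗[ℝ] M) : fre M (Complex.I • x) = - fim M x := by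
  induction x using TensorProduct.induction_on with
  | zero => simp
  | tmul c m =>
      rw [TensorProduct.smul_tmul']
      simp [Complex.mul_re]
  | add a b ha hb => simp only [smul_add, map_add, ha, hb]; abel

lemma decomp (x : ℂ ⊗[ℝ] M) :
    x = (1:ℂ) ⊗ₜ[ℝ] (fre M x) + Complex.I ⊗ₜ[ℝ] (fim M x) := by
  induction x using TensorProduct.induction_on with
  | zero => simp
  | tmul c m =>
      rw [fre_tmul, fim_tmul, TensorProduct.tmul_smul, TensorProduct.tmul_smul,
        TensorProduct.smul_tmul', TensorProduct.smul_tmul', ← TensorProduct.add_tmul]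
      congr 1
      simp [Complex.real_smul, Complex.re_add_im]
  | add a b ha hb =>
      conv_lhs => rw [ha, hb]
      rw [map_add, map_add, TensorProduct.tmul_add, TensorProduct.tmul_add]
      abel

lemma mem_eigI {J : M →ₗ[ℝ] M} {x : ℂ ⊗[ℝ] M} :
    x ∈ eigI J ↔ J.baseChange ℂ x = Complex.I • x :=
  Module.End.mem_eigenspace_iff

/-- The map `v ↦ 1 ⊗ v - I ⊗ J v`. -/
def eL (J : M →ₗ[ℝ] M) : M →ₗ[ℝ] ℂ ⊗[ℝ] M :=
  (TensorProduct.mk ℝ ℂ M 1) - (TensorProduct.mk ℝ ℂ M Complex.I).comp J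

lemma eL_apply (J : M →ₗ[ℝ] M) (v : M) :
    eL J v = (1:ℂ) ⊗ₜ[ℝ] v - Complex.I ⊗ₜ[ℝ] (J v) := rfl

lemma fre_eL (J : M →ₗ[ℝ] M) (v : M) : fre M (eL J v) = v := by
  rw [eL_apply, map_sub, fre_tmul, fre_tmul]; simp

lemma eigI_repr {J : M →ₗ[ℝ] M} {x : ℂ ⊗[ℝ] M} (hx : x ∈ eigI J) :
    x = eL J (fre M x) := by
  have h := mem_eigI.mp hx
  have h2 : J (fre M x) = - fim M x := by
    have h3 := congrArg (fre M) h
    rwa [fre_baseChange, fre_I_smul] at h3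
  rw [eL_apply, h2, TensorProduct.tmul_neg, sub_neg_eq_add]
  exact decomp x

/-- If `K v = J v` and `K (J v) = -v`, then `1 ⊗ v - I ⊗ J v` lies in the
`i`-eigenspace of `K`. -/
lemma eL_mem' {J K : M →ₗ[ℝ] M} (v : M) (hv1 : K v = J v) (hv2 : K (J v) = -v) :
    eL J v ∈ eigI K := by
  rw [mem_eigI, eL_apply, map_sub, LinearMap.baseChange_tmul, LinearMap.baseChange_tmul,
    hv1, hv2, smul_sub, TensorProduct.smul_tmul', TensorProduct.smul_tmul',
    TensorProduct.tmul_neg]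
  rw [smul_eq_mul, smul_eq_mul, mul_one, Complex.I_mul_I, sub_neg_eq_add,
    TensorProduct.neg_tmul, sub_neg_eq_add]
  abel

lemma eL_mem {J : M →ₗ[ℝ] M} (hJ : ∀ v, J (J v) = -v) (v : M) :
    eL J v ∈ eigI J :=
  eL_mem' v rfl (hJ v)

/-- Dimension bridge: if a real subspace `p` corresponds to a complex subspace
`L ⊆ eigI J` under `eL J`, then `dim_ℝ p = 2 dim_ℂ L`. -/
lemma bridge [FiniteDimensional ℝ M] (J : M →ₗ[ℝ] M) (p : Submodule ℝ M)
    (L : Submodule ℂ (ℂ ⊗[ℝ] M)) (hL : L ≤ eigI J)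
    (hmem : ∀ v ∈ p, eL J v ∈ L) (hback : ∀ x ∈ L, fre M x ∈ p) :
    Module.finrank ℝ p = 2 * Module.finrank ℂ L := by
  let φ : ↥p →ₗ[ℝ] ↥(L.restrictScalars ℝ) :=
    ((eL J).comp p.subtype).codRestrict (L.restrictScalars ℝ) (fun v => hmem v.1 v.2)
  have hbij : Function.Bijective φ := by
    constructor
    · intro v w h
      have h2 : eL J v.1 = eL J w.1 := congrArg Subtype.val h
      have h3 := congrArg (fre M) h2
      rw [fre_eL, fre_eL] at h3
      exact Subtype.ext h3
    · intro x
      refine ⟨⟨fre M x.1, hback x.1 x.2⟩, ?_⟩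
      apply Subtype.ext
      exact (eigI_repr (hL x.2)).symm
  have e := LinearEquiv.ofBijective φ hbij
  have h1 : Module.finrank ℝ ↥p = Module.finrank ℝ ↥(L.restrictScalars ℝ) := e.finrank_eq
  have h2 : Module.finrank ℝ ↥(L.restrictScalars ℝ) = 2 * Module.finrank ℂ ↥L := by
    have h3 : Module.finrank ℝ ↥(L.restrictScalars ℝ) = Module.finrank ℝ ↥L :=
      ((Submodule.restrictScalarsEquiv ℝ ℂ (ℂ ⊗[ℝ] M) L).restrictScalars ℝ).finrank_eq
    rw [h3, ← Module.finrank_mul_finrank ℝ ℂ ↥L, Complex.finrank_real_complex]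
  rw [h1, h2]

end Aux

set_option maxHeartbeats 1000000 in
/-- If `J₁, J₂` are commuting `ℝ`-linear complex structures on `V ⊕ V*`,
both preserving the natural pairing and with `⟨J₁J₂v, v⟩ > 0` for `v ≠ 0`, then their
`i`-eigenspaces satisfy `dim_ℂ L₁ = 2 dim_ℂ (L₁ ∩ L₂)`. -/
theorem finrank_eigenspace_eq_two_mul
    (V : Type) [AddCommGroup V] [Module ℝ V] [FiniteDimensional ℝ V]
    (J₁ J₂ : (V × (V →ₗ[ℝ] ℝ)) →ₗ[ℝ] (V × (V →ₗ[ℝ] ℝ)))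
    (h1 : ∀ v, J₁ (J₁ v) = -v) (h2 : ∀ v, J₂ (J₂ v) = -v)
    (hp1 : ∀ u v, npair (J₁ u) (J₁ v) = npair u v)
    (hp2 : ∀ u v, npair (J₂ u) (J₂ v) = npair u v)
    (hcomm : ∀ v, J₁ (J₂ v) = J₂ (J₁ v))
    (hpos : ∀ v : V × (V →ₗ[ℝ] ℝ), v ≠ 0 → 0 < npair (J₁ (J₂ v)) v) :
    Module.finrank ℂ (eigI J₁) = 2 * Module.finrank ℂ ↥(eigI J₁ ⊓ eigI J₂) := by
  classical
  let W := V × (V →ₗ[ℝ] ℝ)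
  let n := Module.finrank ℝ V
  have hndef : n = Module.finrank ℝ V := rfl
  -- the product of the two complex structures, an involution
  set G : W →ₗ[ℝ] W := J₁ ∘ₗ J₂ with hGdef
  have hGapp : ∀ v, G v = J₁ (J₂ v) := fun v => rfl
  have hG2 : ∀ v, G (G v) = v := by
    intro v
    rw [hGapp, hGapp, ← hcomm (J₂ v), h2 v]
    simp [h1 v]
  -- eigenspaces of G
  set Cp : Submodule ℝ W := LinearMap.ker (G - LinearMap.id) with hCpdef
  set Cm : Submodule ℝ W := LinearMap.ker (G + LinearMap.id) with hCmdef
  have hCp : ∀ v : W, v ∈ Cp ↔ G v = v := by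
    intro v
    rw [hCpdef, LinearMap.mem_ker, LinearMap.sub_apply, LinearMap.id_apply, sub_eq_zero]
  have hCm : ∀ v : W, v ∈ Cm ↔ G v = -v := by
    intro v
    rw [hCmdef, LinearMap.mem_ker, LinearMap.add_apply, LinearMap.id_apply,
      add_eq_zero_iff_eq_neg]
  -- dimension of W
  have hW : Module.finrank ℝ W = 2 * n := by
    show Module.finrank ℝ (V × (V →ₗ[ℝ] ℝ)) = 2 * n
    rw [Module.finrank_prod, Module.finrank_linearMap]
    simp [Module.finrank_self]
    omega
  -- the isotropic subspace V × 0
  set V₀ : Submodule ℝ W := LinearMap.range (LinearMap.inl ℝ V (V →ₗ[ℝ] ℝ)) with hV₀def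
  have hV₀iso : ∀ v ∈ V₀, npair v v = 0 := by
    intro v hv
    obtain ⟨x, hx⟩ := hv
    rw [← hx]
    show npair ((x, 0) : V × (V →ₗ[ℝ] ℝ)) (x, 0) = 0
    simp [npair]
  have hV₀rank : Module.finrank ℝ V₀ = n :=
    LinearMap.finrank_range_of_inj LinearMap.inl_injective
  -- sign of the pairing on Cp and Cm
  have hCppos : ∀ v ∈ Cp, v ≠ 0 → 0 < npair v v := by
    intro v hv hv0
    have h := hpos v hv0
    rwa [← hGapp, (hCp v).mp hv] at h
  have hCmneg : ∀ v ∈ Cm, v ≠ 0 → npair v v < 0 := by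
    intro v hv hv0
    have h := hpos v hv0
    rw [← hGapp, (hCm v).mp hv] at h
    have hneg : npair (-v : W) v = - npair v v := by
      have e1 : (-v : W).1 = -v.1 := rfl
      have e2 : (-v : W).2 = -v.2 := rfl
      simp only [npair, e1, e2, map_neg, LinearMap.neg_apply]
      ring
    rw [hneg] at h
    linarith
  -- disjointness with V₀
  have hdisCp : Cp ⊓ V₀ = ⊥ := by
    rw [Submodule.eq_bot_iff]
    intro v hv
    by_contra hne
    have hgt := hCppos v (Submodule.mem_inf.mp hv).1 hne
    rw [hV₀iso v (Submodule.mem_inf.mp hv).2] at hgt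
    exact lt_irrefl 0 hgt
  have hdisCm : Cm ⊓ V₀ = ⊥ := by
    rw [Submodule.eq_bot_iff]
    intro v hv
    by_contra hne
    have hlt := hCmneg v (Submodule.mem_inf.mp hv).1 hne
    rw [hV₀iso v (Submodule.mem_inf.mp hv).2] at hlt
    exact lt_irrefl 0 hlt
  -- Cp and Cm decompose W
  have hsup : Cp ⊔ Cm = ⊤ := by
    rw [eq_top_iff]
    intro v _
    rw [Submodule.mem_sup]
    refine ⟨(1/2 : ℝ) • (v + G v), ?_, (1/2 : ℝ) • (v - G v), ?_, ?_⟩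
    · rw [hCp]
      rw [map_smul, map_add, hG2 v]
      rw [smul_add, smul_add]
      abel
    · rw [hCm]
      rw [map_smul, map_sub, hG2 v]
      rw [smul_sub, smul_sub, neg_sub]
    · rw [← smul_add]
      have : v + G v + (v - G v) = (2:ℝ) • v := by
        rw [two_smul]; abel
      rw [this, smul_smul]
      norm_num
  have hinf : Cp ⊓ Cm = ⊥ := by
    rw [Submodule.eq_bot_iff]
    intro v hv
    have hp := (hCp v).mp (Submodule.mem_inf.mp hv).1
    have hm := (hCm v).mp (Submodule.mem_inf.mp hv).2
    rw [hp] at hm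
    have h2v : (2:ℝ) • v = 0 := by
      rw [two_smul]
      nth_rewrite 2 [hm]
      exact add_neg_cancel v
    rcases smul_eq_zero.mp h2v with h | h
    · norm_num at h
    · exact h
  -- dimension count for Cp, Cm
  have hsum : Module.finrank ℝ Cp + Module.finrank ℝ Cm = 2 * n := by
    have h := Submodule.finrank_sup_add_finrank_inf_eq Cp Cm
    rw [hsup, hinf] at h
    rw [finrank_top, hW, finrank_bot, add_zero] at h
    omega
  have hCple : Module.finrank ℝ Cp + n ≤ 2 * n := by
    have h := Submodule.finrank_sup_add_finrank_inf_eq Cp V₀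
    rw [hdisCp, finrank_bot, add_zero, hV₀rank] at h
    have hle : Module.finrank ℝ ↥(Cp ⊔ V₀) ≤ Module.finrank ℝ W := Submodule.finrank_le _
    rw [hW] at hle
    omega
  have hCmle : Module.finrank ℝ Cm + n ≤ 2 * n := by
    have h := Submodule.finrank_sup_add_finrank_inf_eq Cm V₀
    rw [hdisCm, finrank_bot, add_zero, hV₀rank] at h
    have hle : Module.finrank ℝ ↥(Cm ⊔ V₀) ≤ Module.finrank ℝ W := Submodule.finrank_le _
    rw [hW] at hle
    omega
  have hCmrank : Module.finrank ℝ Cm = n := by omega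
  -- dimension of eigI J₁
  have hA : Module.finrank ℝ (⊤ : Submodule ℝ W) = 2 * Module.finrank ℂ (eigI J₁) :=
    bridge J₁ ⊤ (eigI J₁) le_rfl (fun v _ => eL_mem h1 v) (fun x _ => Submodule.mem_top)
  have hArank : 2 * n = 2 * Module.finrank ℂ (eigI J₁) := by
    rw [← hA, finrank_top, hW]
  -- dimension of the intersection
  have hB : Module.finrank ℝ Cm = 2 * Module.finrank ℂ ↥(eigI J₁ ⊓ eigI J₂) := by
    apply bridge J₁ Cm (eigI J₁ ⊓ eigI J₂) inf_le_left
    · intro v hv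
      have hGv := (hCm v).mp hv
      rw [hGapp] at hGv
      have e1 : J₂ v = J₁ v := by
        have h3 := congrArg J₁ hGv
        rw [h1 (J₂ v)] at h3
        rw [map_neg] at h3
        exact neg_injective h3
      have e2 : J₂ (J₁ v) = -v := by rw [← hcomm v]; exact hGv
      exact Submodule.mem_inf.mpr ⟨eL_mem h1 v, eL_mem' v e1 e2⟩
    · intro x hx
      have hx1 := mem_eigI.mp (Submodule.mem_inf.mp hx).1
      have hx2 := mem_eigI.mp (Submodule.mem_inf.mp hx).2
      rw [hCm, hGapp]
      have hGx : J₁.baseChange ℂ (J₂.baseChange ℂ x) = -x := by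
        rw [hx2, map_smul, hx1, smul_smul, Complex.I_mul_I, neg_one_smul]
      have h3 := congrArg (fre W) hGx
      rw [fre_baseChange, fre_baseChange, map_neg] at h3
      exact h3
  -- conclude
  have hBrank : n = 2 * Module.finrank ℂ ↥(eigI J₁ ⊓ eigI J₂) := by
    rw [← hB, hCmrank]
  omega

end GKTest
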